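/- arXiv:2602.07167 — 2 statements merged into one kernel-verified Lean document; each statement's English description precedes it below -/
import Mathlib

section
/- Let n ≥ 2 and let b be a symmetric bilinear form on the real vector space of symmetric n×n real matrices which is invariant under orthogonal conjugation, i.e. b(O G Oᵀ, O H Oᵀ) = b(G, H) for all symmetric G, H and all orthogonal matrices O (OᵀO = Id). Then there exist real constants a, β such that b(G, H) = a · tr(G H) + β · (tr G)(tr H) for all symmetric n×n matrices G, H. -/
open Matrix

section Aux

variable {n : ℕ}

private lemma aux_sum_sgn (i j : Fin n) (hij : i ≠ j) :
    ∑ ε : Fin n → Bool, ((if ε i then (1:ℝ) else -1) * (if ε j then 1 else -1)) = 0 := by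
  have hinvol : Function.Involutive (fun ε : Fin n → Bool => Function.update ε j (!ε j)) := by
    intro ε
    funext k
    by_cases hk : k = j <;> simp [Function.update, hk]
  let e := hinvol.toPerm _
  have h := Equiv.sum_comp e (fun ε : Fin n → Bool =>
    (if ε i then (1:ℝ) else -1) * (if ε j then 1 else -1))
  have h2 : ∀ ε : Fin n → Bool,
      ((if (e ε) i then (1:ℝ) else -1) * (if (e ε) j then 1 else -1))
        = -((if ε i then (1:ℝ) else -1) * (if ε j then 1 else -1)) := by
    intro ε
    have hi : (e ε) i = ε i := Function.update_of_ne hij _ _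
    have hj : (e ε) j = !ε j := Function.update_self _ _ _
    rw [hi, hj]
    cases ε i <;> cases ε j <;> norm_num
  simp only [h2] at h
  rw [Finset.sum_neg_distrib] at h
  linarith

private lemma aux_avg (K : Matrix (Fin n) (Fin n) ℝ) :
    ∑ ε : Fin n → Bool,
      (diagonal (fun i => if ε i then (1:ℝ) else -1) * K *
        diagonal (fun i => if ε i then (1:ℝ) else -1))
      = ((2:ℝ)^n) • diagonal (fun i => K i i) := by
  ext i j
  rw [Matrix.sum_apply]
  have hentry : ∀ ε : Fin n → Bool,
      (diagonal (fun i => if ε i then (1:ℝ) else -1) * K *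
        diagonal (fun i => if ε i then (1:ℝ) else -1)) i j
      = ((if ε i then (1:ℝ) else -1) * (if ε j then 1 else -1)) * K i j := by
    intro ε
    rw [Matrix.mul_diagonal, Matrix.diagonal_mul]
    ring
  simp only [hentry]
  rw [← Finset.sum_mul]
  by_cases hij : i = j
  · subst hij
    have : ∀ ε : Fin n → Bool,
        ((if ε i then (1:ℝ) else -1) * (if ε i then 1 else -1)) = 1 := by
      intro ε; cases ε i <;> norm_num
    simp only [this]
    simp [Finset.sum_const, Matrix.smul_apply, Matrix.diagonal_apply_eq]
  · rw [aux_sum_sgn i j hij, zero_mul, Matrix.smul_apply, Matrix.diagonal_apply_ne _ hij,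
      smul_zero]

private lemma aux_perm_orth (σ : Equiv.Perm (Fin n)) :
    (σ.permMatrix ℝ)ᵀ * (σ.permMatrix ℝ) = 1 := by
  rw [← PEquiv.toMatrix_symm, ← Equiv.toPEquiv_symm, ← PEquiv.toMatrix_trans,
    ← Equiv.toPEquiv_trans]
  simp

private lemma aux_perm_conj (σ : Equiv.Perm (Fin n)) (M : Matrix (Fin n) (Fin n) ℝ) :
    (σ.permMatrix ℝ) * M * (σ.permMatrix ℝ)ᵀ = M.submatrix σ σ := by
  rw [PEquiv.toMatrix_toPEquiv_mul, ← PEquiv.toMatrix_symm, ← Equiv.toPEquiv_symm,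
    PEquiv.mul_toMatrix_toPEquiv]
  simp [Matrix.submatrix_submatrix]

private lemma aux_single_submatrix (σ : Equiv.Perm (Fin n)) (k : Fin n) :
    (diagonal (Pi.single k (1:ℝ))).submatrix σ σ = diagonal (Pi.single (σ.symm k) 1) := by
  ext i j
  by_cases hij : i = j
  · subst hij
    simp [Pi.single_apply, Equiv.eq_symm_apply, eq_comm]
  · have : σ i ≠ σ j := fun h => hij (σ.injective h)
    simp [diagonal_apply_ne _ hij, diagonal_apply_ne _ this]

private lemma aux_diag_decomp (d : Fin n → ℝ) :
    diagonal d = ∑ i, d i • diagonal (Pi.single i (1:ℝ)) := by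
  ext a c
  rw [Matrix.sum_apply]
  by_cases hac : a = c
  · subst hac
    simp [Pi.single_apply, mul_ite]
  · simp [diagonal_apply_ne _ hac]

private lemma aux_bilin_expand
    (b : Matrix (Fin n) (Fin n) ℝ →ₗ[ℝ] Matrix (Fin n) (Fin n) ℝ →ₗ[ℝ] ℝ)
    (d e : Fin n → ℝ) :
    b (diagonal d) (diagonal e)
      = ∑ i, ∑ j, d i * e j * b (diagonal (Pi.single i 1)) (diagonal (Pi.single j 1)) := by
  rw [aux_diag_decomp d, aux_diag_decomp e]
  simp only [map_sum, LinearMap.sum_apply, _root_.map_smul, LinearMap.smul_apply,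
    smul_eq_mul, Finset.mul_sum, Finset.smul_sum]
  rw [Finset.sum_comm]
  exact Finset.sum_congr rfl fun i _ => Finset.sum_congr rfl fun j _ => by ring

private lemma aux_double_sum (d e : Fin n → ℝ) (c1 c2 : ℝ) :
    ∑ i, ∑ j, d i * e j * (if i = j then c1 else c2)
      = (c1 - c2) * (∑ i, d i * e i) + c2 * ((∑ i, d i) * (∑ i, e i)) := by
  have key : ∀ i j : Fin n, d i * e j * (if i = j then c1 else c2)
      = d i * e j * c2 + (if j = i then d j * e j * (c1 - c2) else 0) := by
    intro i j
    by_cases h : i = j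
    · subst h; simp; ring
    · simp [h, Ne.symm h]
  have hr : c2 * ((∑ i, d i) * (∑ i, e i)) = ∑ i, ∑ j, d i * e j * c2 := by
    rw [Finset.sum_mul_sum, Finset.mul_sum]
    exact Finset.sum_congr rfl fun i _ => by
      rw [Finset.mul_sum]; exact Finset.sum_congr rfl fun j _ => by ring
  have hl : (c1 - c2) * (∑ i, d i * e i) = ∑ i, d i * e i * (c1 - c2) := by
    rw [Finset.mul_sum]; exact Finset.sum_congr rfl fun i _ => by ring
  rw [hr, hl]
  simp only [key, Finset.sum_add_distrib, Finset.sum_ite_eq', Finset.mem_univ, if_true]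
  rw [add_comm]

private lemma aux_trace_diag_mul (d : Fin n → ℝ) (K : Matrix (Fin n) (Fin n) ℝ) :
    (diagonal d * K).trace = ∑ i, d i * K i i := by
  simp [Matrix.trace, Matrix.diag, Matrix.diagonal_mul]

end Aux

/-- Every symmetric bilinear form on the symmetric `n×n` real matrices (here encoded as a
bilinear form on all matrices whose relevant properties are only required on symmetric
arguments) which is invariant under orthogonal conjugation is a linear combination of
`tr (G * H)` and `tr G * tr H`. -/
theorem invariant_bilinear_form_on_symmetric_matrices
    (n : ℕ) (hn : 2 ≤ n)
    (b : Matrix (Fin n) (Fin n) ℝ →ₗ[ℝ] Matrix (Fin n) (Fin n) ℝ →ₗ[ℝ] ℝ)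
    (hsymm : ∀ G H : Matrix (Fin n) (Fin n) ℝ, G.IsSymm → H.IsSymm → b G H = b H G)
    (hinv : ∀ (O G H : Matrix (Fin n) (Fin n) ℝ), Oᵀ * O = 1 → G.IsSymm → H.IsSymm →
      b (O * G * Oᵀ) (O * H * Oᵀ) = b G H) :
    ∃ a β : ℝ, ∀ G H : Matrix (Fin n) (Fin n) ℝ, G.IsSymm → H.IsSymm →
      b G H = a * (G * H).trace + β * (G.trace * H.trace) := by
  -- two distinguished indices
  set i0 : Fin n := ⟨0, by omega⟩ with hi0
  set i1 : Fin n := ⟨1, by omega⟩ with hi1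
  have h01 : i0 ≠ i1 := by simp [hi0, hi1, Fin.ext_iff]
  set E : Fin n → Matrix (Fin n) (Fin n) ℝ := fun k => diagonal (Pi.single k 1) with hE
  set c1 : ℝ := b (E i0) (E i0) with hc1
  set c2 : ℝ := b (E i0) (E i1) with hc2
  -- invariance under permutations
  have hperm : ∀ (σ : Equiv.Perm (Fin n)) (G H : Matrix (Fin n) (Fin n) ℝ),
      G.IsSymm → H.IsSymm → b (G.submatrix σ σ) (H.submatrix σ σ) = b G H := by
    intro σ G H hG hH
    have h := hinv (σ.permMatrix ℝ) G H (aux_perm_orth σ) hG hH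
    rwa [aux_perm_conj, aux_perm_conj] at h
  -- value of b on pairs of diagonal basis matrices
  have hEE : ∀ i j : Fin n, b (E i) (E j) = if i = j then c1 else c2 := by
    intro i j
    by_cases h : i = j
    · subst h
      rw [if_pos rfl, hc1]
      have h := hperm (Equiv.swap i0 i) (E i0) (E i0)
        (isSymm_diagonal _) (isSymm_diagonal _)
      rw [hE] at h ⊢
      rwa [aux_single_submatrix, Equiv.symm_swap, Equiv.swap_apply_left] at h
    · rw [if_neg h, hc2]
      set τ : Equiv.Perm (Fin n) := Equiv.swap i0 i with hτ
      set j' : Fin n := τ j with hj'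
      have hj'0 : j' ≠ i0 := by
        intro hcon
        have : j = i := by
          have := congrArg τ.symm hcon
          simpa [hj', hτ, Equiv.swap_apply_left] using this
        exact h this.symm
      set σ : Equiv.Perm (Fin n) := τ.trans (Equiv.swap i1 j') with hσ
      have hσi : σ i = i0 := by
        have hτi : τ i = i0 := Equiv.swap_apply_right i0 i
        rw [hσ, Equiv.trans_apply, hτi]
        exact Equiv.swap_apply_of_ne_of_ne h01 hj'0.symm
      have hσj : σ j = i1 := by
        simp [hσ, ← hj', Equiv.swap_apply_right]
      have h1 : σ.symm i0 = i := by rw [Equiv.symm_apply_eq, hσi]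
      have h2 : σ.symm i1 = j := by rw [Equiv.symm_apply_eq, hσj]
      have h := hperm σ (E i0) (E i1) (isSymm_diagonal _) (isSymm_diagonal _)
      rw [hE] at h ⊢
      rwa [aux_single_submatrix, aux_single_submatrix, h1, h2] at h
  -- the formula on pairs of diagonal matrices
  have hdiagform : ∀ d e : Fin n → ℝ, b (diagonal d) (diagonal e)
      = (c1 - c2) * (∑ i, d i * e i) + c2 * ((∑ i, d i) * (∑ i, e i)) := by
    intro d e
    rw [aux_bilin_expand]
    rw [← aux_double_sum d e c1 c2]
    refine Finset.sum_congr rfl fun i _ => Finset.sum_congr rfl fun j _ => ?_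
    rw [← hEE i j]
  -- sign-flip averaging: b (diagonal d) K only depends on the diagonal of K
  have hsign : ∀ (d : Fin n → ℝ) (K : Matrix (Fin n) (Fin n) ℝ), K.IsSymm →
      b (diagonal d) K = b (diagonal d) (diagonal (fun i => K i i)) := by
    intro d K hK
    have h1 : ∀ ε : Fin n → Bool,
        b (diagonal d) (diagonal (fun i => if ε i then (1:ℝ) else -1) * K *
          diagonal (fun i => if ε i then (1:ℝ) else -1)) = b (diagonal d) K := by
      intro ε
      have horth : (diagonal (fun i => if ε i then (1:ℝ) else -1))ᵀ *
          diagonal (fun i => if ε i then (1:ℝ) else -1) = 1 := by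
        rw [diagonal_transpose, diagonal_mul_diagonal]
        have hone : (fun i => (if ε i then (1:ℝ) else -1) * (if ε i then (1:ℝ) else -1))
            = fun _ => (1:ℝ) := by
          funext i; by_cases hb : ε i <;> simp [hb]
        rw [hone, diagonal_one]
      have hfix : diagonal (fun i => if ε i then (1:ℝ) else -1) * diagonal d *
          (diagonal (fun i => if ε i then (1:ℝ) else -1))ᵀ = diagonal d := by
        rw [diagonal_transpose]
        ext i j
        rw [Matrix.mul_diagonal, Matrix.diagonal_mul]
        by_cases hij : i = j
        · subst hij
          simp only [diagonal_apply_eq]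
          by_cases hb : ε i
          · simp [hb]
          · rw [if_neg hb]; ring
        · simp only [diagonal_apply_ne _ hij]
          ring
      have h := hinv _ (diagonal d) K horth (isSymm_diagonal _) hK
      rwa [hfix, diagonal_transpose] at h
    have h2 := aux_avg K
    have h3 : b (diagonal d) (((2:ℝ)^n) • diagonal (fun i => K i i))
        = ∑ ε : Fin n → Bool, b (diagonal d)
            (diagonal (fun i => if ε i then (1:ℝ) else -1) * K *
              diagonal (fun i => if ε i then (1:ℝ) else -1)) := by
      rw [← h2, map_sum]
    rw [_root_.map_smul, smul_eq_mul] at h3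
    simp only [h1, Finset.sum_const, Finset.card_univ, smul_eq_mul] at h3
    have hcard : (Fintype.card (Fin n → Bool) : ℝ) = (2:ℝ)^n := by
      rw [Fintype.card_fun]
      push_cast
      simp
    have hpow : ((2:ℝ)^n) ≠ 0 := by positivity
    apply mul_left_cancel₀ hpow
    rw [h3, ← hcard]
    push_cast
    ring
  refine ⟨c1 - c2, c2, fun G H hG hH => ?_⟩
  -- diagonalize G
  have hG' : G.IsHermitian := by
    rwa [Matrix.IsHermitian, conjTranspose_eq_transpose_of_trivial]
  set U : Matrix (Fin n) (Fin n) ℝ := (hG'.eigenvectorUnitary : Matrix (Fin n) (Fin n) ℝ)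
    with hU
  set d : Fin n → ℝ := hG'.eigenvalues with hd
  have hspec : G = U * diagonal d * Uᵀ := by
    have h := hG'.spectral_theorem
    simpa [hU, hd, Matrix.star_eq_conjTranspose, conjTranspose_eq_transpose_of_trivial,
      Function.comp] using h
  have hUtU : Uᵀ * U = 1 := by
    have h := hG'.eigenvectorUnitary.2
    rw [Unitary.mem_iff] at h
    have := h.1
    rwa [Matrix.star_eq_conjTranspose, conjTranspose_eq_transpose_of_trivial] at this
  have hUUt : U * Uᵀ = 1 := mul_eq_one_comm.mp hUtU
  set K : Matrix (Fin n) (Fin n) ℝ := Uᵀ * H * U with hKdef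
  have hKsymm : K.IsSymm := by
    rw [Matrix.IsSymm, hKdef, Matrix.transpose_mul, Matrix.transpose_mul,
      Matrix.transpose_transpose, hH.eq, Matrix.mul_assoc]
  have hb1 : b G H = b (diagonal d) K := by
    have h := hinv U (diagonal d) K hUtU (isSymm_diagonal _) hKsymm
    have hUKU : U * K * Uᵀ = H := by
      rw [hKdef]
      rw [show U * (Uᵀ * H * U) * Uᵀ = (U * Uᵀ) * H * (U * Uᵀ) by
        simp only [Matrix.mul_assoc]]
      rw [hUUt, one_mul, mul_one]
    rw [hUKU, ← hspec] at h
    exact h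
  have htrGH : (G * H).trace = ∑ i, d i * K i i := by
    rw [hspec]
    rw [show U * diagonal d * Uᵀ * H = U * (diagonal d * (Uᵀ * H)) by
      simp only [Matrix.mul_assoc]]
    rw [Matrix.trace_mul_comm]
    rw [show diagonal d * (Uᵀ * H) * U = diagonal d * (Uᵀ * H * U) by
      simp only [Matrix.mul_assoc]]
    rw [← hKdef, aux_trace_diag_mul]
  have htrG : G.trace = ∑ i, d i := by
    rw [hspec, Matrix.trace_mul_comm, ← Matrix.mul_assoc, hUtU, one_mul, trace_diagonal]
  have htrH : H.trace = ∑ i, K i i := by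
    have : K.trace = H.trace := by
      rw [hKdef, Matrix.trace_mul_comm]
      rw [show U * (Uᵀ * H) = (U * Uᵀ) * H by simp only [Matrix.mul_assoc]]
      rw [hUUt, one_mul]
    rw [← this, Matrix.trace]
    rfl
  rw [hb1, hsign d K hKsymm, hdiagform, htrGH, htrG, htrH]
end

section
/- Let c > 0, K > 0, τ* ∈ ℝ, σ* ∈ ℝ, and let g : ℝ → ℝ be continuously differentiable with |g'(y)| ≤ K for all y and g'(y) = 0 for y ∉ [σ*, σ*+1]. For τ < τ* and σ ∈ ℝ define u(τ, σ) = ∫_ℝ g(y) · (4πc(τ*−τ))^{−1/2} · exp( −(y − σ − c(τ*−τ))² / (4c(τ*−τ)) ) dy. Then there exists a constant C depending only on c and K such that for all τ < τ* and all σ ∈ ℝ: |∂_σ u(τ, σ)| ≤ C / √(1 + τ* − τ). -/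
/-!
Substituting `y = σ + c(τ* - τ) + z` turns `u(τ, ·)` into the convolution of `g` with the
centred Gaussian density of variance `2c(τ* - τ)`, so `∂_σ u` is the same Gaussian average of
`g'`. Averaging against a probability density gives `|∂_σ u| ≤ K`; since `g'` lives on an
interval of length one and the density is at most `(4πc(τ* - τ))^(-1/2)`, also
`|∂_σ u| ≤ K (4πc(τ* - τ))^(-1/2)`. The first bound wins for `τ* - τ ≤ 1`, the second
after.
-/

open Real MeasureTheory
open ProbabilityTheory
open scoped NNReal

lemma abs_add_le_of_abs_deriv_le {g : ℝ → ℝ} {K : ℝ} (hg : Differentiable ℝ g)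
    (hg' : ∀ y, |deriv g y| ≤ K) (x z : ℝ) : |g (x + z)| ≤ |g x| + K * |z| := by
  have h := Convex.norm_image_sub_le_of_norm_deriv_le (fun y _ => hg y) (fun y _ => hg' y)
    convex_univ (Set.mem_univ x) (Set.mem_univ (x + z))
  simp only [Real.norm_eq_abs, add_sub_cancel_left] at h
  linarith [abs_sub_abs_le_abs_sub (g (x + z)) (g x)]

lemma hasDerivAt_integral_comp_add_mul {g w : ℝ → ℝ} {K : ℝ} (hg : Differentiable ℝ g)
    (hg' : ∀ y, |deriv g y| ≤ K) (hw : Integrable w) (hzw : Integrable fun z => z * w z)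
    (x : ℝ) :
    HasDerivAt (fun s => ∫ z, g (s + z) * w z) (∫ z, deriv g (x + z) * w z) x := by
  have hmeas : ∀ s, AEStronglyMeasurable (fun z => g (s + z) * w z) volume := fun s =>
    ((hg.continuous.comp (continuous_const_add s)).aestronglyMeasurable).mul hw.1
  -- `g` grows at most linearly, and `w` has a finite first moment.
  have hint : Integrable (fun z => g (x + z) * w z) := by
    refine ((hw.abs.const_mul |g x|).add (hzw.abs.const_mul K)).mono' (hmeas x)
      (ae_of_all _ fun z => ?_)
    rw [Real.norm_eq_abs, abs_mul, Pi.add_apply, abs_mul, ← mul_assoc, ← add_mul]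
    exact mul_le_mul_of_nonneg_right (abs_add_le_of_abs_deriv_le hg hg' x z) (abs_nonneg _)
  refine (hasDerivAt_integral_of_dominated_loc_of_deriv_le
    (F' := fun s z => deriv g (s + z) * w z) (bound := fun z => K * |w z|)
    Filter.univ_mem (Filter.Eventually.of_forall hmeas) hint
    (((measurable_deriv g).comp (measurable_const_add x)).aestronglyMeasurable.mul hw.1)
    (ae_of_all _ fun z s _ => ?_) (hw.abs.const_mul K) (ae_of_all _ fun z s _ => ?_)).2
  · rw [Real.norm_eq_abs, abs_mul]
    exact mul_le_mul_of_nonneg_right (hg' _) (abs_nonneg _)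
  · have hshift : HasDerivAt (fun s => s + z) 1 s := (hasDerivAt_id s).add_const z
    simpa using ((hg (s + z)).hasDerivAt.comp s hshift).mul_const (w z)

lemma abs_integral_mul_le_mul_integral {α : Type*} [MeasurableSpace α] {μ : Measure α}
    {f w : α → ℝ} {K : ℝ} (hf : ∀ z, |f z| ≤ K) (hw : Integrable w μ)
    (hw0 : ∀ z, 0 ≤ w z) :
    |∫ z, f z * w z ∂μ| ≤ K * ∫ z, w z ∂μ := by
  rw [← integral_const_mul, ← Real.norm_eq_abs]
  refine norm_integral_le_of_norm_le (hw.const_mul K) (ae_of_all _ fun z => ?_)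
  rw [Real.norm_eq_abs, abs_mul, abs_of_nonneg (hw0 z)]
  exact mul_le_mul_of_nonneg_right (hf z) (hw0 z)

lemma abs_integral_mul_le_of_eq_zero_off_Icc {f w : ℝ → ℝ} {K M a b : ℝ} (hab : a ≤ b)
    (hf : ∀ z, |f z| ≤ K) (hf0 : ∀ z ∉ Set.Icc a b, f z = 0) (hw0 : ∀ z, 0 ≤ w z)
    (hwM : ∀ z, w z ≤ M) :
    |∫ z, f z * w z| ≤ K * M * (b - a) := by
  rw [← setIntegral_eq_integral_of_forall_compl_eq_zero fun z hz => by rw [hf0 z hz, zero_mul],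
    ← Real.norm_eq_abs, ← Real.volume_real_Icc_of_le hab]
  refine norm_setIntegral_le_of_norm_le_const measure_Icc_lt_top fun z _ => ?_
  rw [Real.norm_eq_abs, abs_mul, abs_of_nonneg (hw0 z)]
  exact mul_le_mul (hf z) (hwM z) (hw0 z) ((abs_nonneg _).trans (hf z))

lemma gaussianPDFReal_le (μ : ℝ) (v : ℝ≥0) (x : ℝ) :
    gaussianPDFReal μ v x ≤ (√(2 * π * v))⁻¹ := by
  refine mul_le_of_le_one_right (by positivity) (exp_le_one_iff.2 ?_)
  exact div_nonpos_of_nonpos_of_nonneg (neg_nonpos.2 (sq_nonneg _)) (by positivity)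

lemma integrable_id_mul_gaussianPDFReal_zero (v : ℝ≥0) :
    Integrable fun z => z * gaussianPDFReal 0 v z := by
  rcases eq_or_ne v 0 with rfl | hv
  · simp
  have hb : 0 < (2 * (v : ℝ))⁻¹ := by positivity
  refine ((integrable_mul_exp_neg_mul_sq hb).const_mul (√(2 * π * v))⁻¹).congr
    (ae_of_all _ fun z => ?_)
  simp only [gaussianPDFReal, sub_zero]
  ring_nf

lemma integral_mul_gaussianPDFReal_eq_integral_comp_add (g : ℝ → ℝ) (μ : ℝ) (v : ℝ≥0) :
    ∫ y, g y * gaussianPDFReal μ v y = ∫ z, g (μ + z) * gaussianPDFReal 0 v z := by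
  rw [← integral_add_left_eq_self _ μ]
  simp [gaussianPDFReal]

lemma heatKernel_eq_gaussianPDFReal {c t : ℝ} (hct : 0 ≤ c * t) (σ y : ℝ) :
    (4 * π * c * t) ^ (-(1 : ℝ) / 2) * exp (-(y - σ - c * t) ^ 2 / (4 * c * t))
      = gaussianPDFReal (σ + c * t) (2 * c * t).toNNReal y := by
  have h2ct : (0 : ℝ) ≤ 2 * c * t := by linarith
  rw [gaussianPDFReal, Real.coe_toNNReal _ h2ct, sqrt_eq_rpow, ← rpow_neg (by positivity)]
  congr 2 <;> ring_nf

lemma le_div_sqrt_one_add_of_le_of_le_div_sqrt {x K B t : ℝ} (hx : 0 ≤ x) (hB : 0 ≤ B)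
    (ht : 0 < t) (h₁ : x ≤ K) (h₂ : x ≤ K * B / √t) :
    x ≤ K * √2 * (1 + B) / √(1 + t) := by
  have hst : 0 < √t := sqrt_pos.2 ht
  have hK : 0 ≤ K := hx.trans h₁
  rw [le_div_iff₀ (sqrt_pos.2 (by linarith))]
  rcases le_or_gt t 1 with hle | hgt
  · have : √(1 + t) ≤ √2 := sqrt_le_sqrt (by linarith)
    nlinarith [mul_le_mul h₁ this (sqrt_nonneg _) hK,
      mul_nonneg (mul_nonneg hK (sqrt_nonneg 2)) hB]
  · have : √(1 + t) ≤ √2 * √t := by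
      rw [← sqrt_mul zero_le_two]; exact sqrt_le_sqrt (by linarith)
    rw [le_div_iff₀ hst] at h₂
    nlinarith [mul_le_mul_of_nonneg_left this hx, sqrt_nonneg 2, sqrt_nonneg (1 + t)]

theorem first_derivative_decay_of_heat_semigroup_general
    (c K : ℝ) (hc : 0 < c) :
    ∃ C : ℝ, ∀ (τs σs : ℝ) (g : ℝ → ℝ), ContDiff ℝ 1 g →
      (∀ y, |deriv g y| ≤ K) →
      (∀ y, y ∉ Set.Icc σs (σs + 1) → deriv g y = 0) →
      ∀ (u : ℝ → ℝ → ℝ),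
        (∀ (τ σ : ℝ), τ < τs →
          u τ σ = ∫ y : ℝ, g y * (4 * π * c * (τs - τ)) ^ (-(1 : ℝ) / 2)
            * Real.exp (-(y - σ - c * (τs - τ)) ^ 2 / (4 * c * (τs - τ)))) →
        ∀ (τ σ : ℝ), τ < τs →
          |deriv (fun s => u τ s) σ| ≤ C / Real.sqrt (1 + τs - τ) := by
  refine ⟨K * √2 * (1 + (√(4 * π * c))⁻¹), ?_⟩
  intro τs σs g hg hgK hg0 u hu τ σ hτ
  have hu_τ := fun s => hu τ s hτ
  set t := τs - τ
  have ht : 0 < t := sub_pos.2 hτ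
  set v := (2 * c * t).toNNReal
  have hv : (v : ℝ) = 2 * c * t := Real.coe_toNNReal _ (by positivity)
  have hv0 : v ≠ 0 := (Real.toNNReal_pos.2 (by positivity)).ne'
  have hu_shift : (fun s => u τ s)
      = fun s => (fun m => ∫ z, g (m + z) * gaussianPDFReal 0 v z) (s + c * t) := by
    funext s
    simp_rw [hu_τ, mul_assoc (g _), heatKernel_eq_gaussianPDFReal (by positivity : 0 ≤ c * t)]
    exact integral_mul_gaussianPDFReal_eq_integral_comp_add g _ v
  have hderiv := (hasDerivAt_integral_comp_add_mul (hg.differentiable one_ne_zero) hgK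
    (integrable_gaussianPDFReal 0 v) (integrable_id_mul_gaussianPDFReal_zero v)
    (σ + c * t)).comp_add_const σ (c * t)
  rw [hu_shift, hderiv.deriv, add_sub_assoc]
  refine le_div_sqrt_one_add_of_le_of_le_div_sqrt (abs_nonneg _) (by positivity) ht ?_ ?_
  · have h_avg := abs_integral_mul_le_mul_integral (fun z => hgK (σ + c * t + z))
      (integrable_gaussianPDFReal 0 v) (gaussianPDFReal_nonneg 0 v)
    rwa [integral_gaussianPDFReal_eq_one 0 hv0, mul_one] at h_avg
  · have h_off : ∀ z ∉ Set.Icc (σs - (σ + c * t)) (σs + 1 - (σ + c * t)),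
        deriv g (σ + c * t + z) = 0 :=
      fun z hz => hg0 _ fun ⟨h₁, h₂⟩ => hz ⟨by linarith, by linarith⟩
    convert abs_integral_mul_le_of_eq_zero_off_Icc (by linarith) (fun z => hgK (σ + c * t + z))
      h_off (gaussianPDFReal_nonneg 0 v) (gaussianPDFReal_le 0 v) using 1
    rw [hv, show 2 * π * (2 * c * t) = 4 * π * c * t by ring,
      sqrt_mul (by positivity : 0 ≤ 4 * π * c) t]
    ring

theorem first_derivative_decay_of_heat_semigroup
    (c K : ℝ) (hc : 0 < c) (hK : 0 < K) :
    ∃ C : ℝ, ∀ (τs σs : ℝ) (g : ℝ → ℝ), ContDiff ℝ 1 g →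
      (∀ y, |deriv g y| ≤ K) →
      (∀ y, y ∉ Set.Icc σs (σs + 1) → deriv g y = 0) →
      ∀ (u : ℝ → ℝ → ℝ),
        (∀ (τ σ : ℝ), τ < τs →
          u τ σ = ∫ y : ℝ, g y * (4 * π * c * (τs - τ)) ^ (-(1 : ℝ) / 2)
            * Real.exp (-(y - σ - c * (τs - τ)) ^ 2 / (4 * c * (τs - τ)))) →
        ∀ (τ σ : ℝ), τ < τs →
          |deriv (fun s => u τ s) σ| ≤ C / Real.sqrt (1 + τs - τ) :=
  first_derivative_decay_of_heat_semigroup_general c K hc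
end
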